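/- Suppose G_1,…,G_r are first class with structure functions C^c_{ab} for the canonical Poisson bracket on ℝ^n × ℝ^n, let H, V_a^b : ℝ^n × ℝ^n → ℝ be smooth with {G_a, H} = Σ_b V_a^b G_b identically, and suppose that at every point of the constraint surface the total derivative of G = (G_1,…,G_r) is surjective onto ℝ^r. Then for all a,b,c the function {G_a, V_b^c} − {G_b, V_a^c} + {H, C^c_{ab}} + Σ_{d=1}^r ( V_b^d C^c_{ad} − V_a^d C^c_{bd} − V_d^c C^d_{ab} ) vanishes at every point of the constraint surface. -/

import Mathlib

open scoped BigOperators

/-- `∂f/∂x^i` on phase space `ℝ^n × ℝ^n`. -/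
noncomputable def pdx {n : ℕ} (f : (Fin n → ℝ) × (Fin n → ℝ) → ℝ) (i : Fin n)
    (z : (Fin n → ℝ) × (Fin n → ℝ)) : ℝ :=
  fderiv ℝ f z (Pi.single i 1, 0)

/-- `∂f/∂p_i` on phase space `ℝ^n × ℝ^n`. -/
noncomputable def pdp {n : ℕ} (f : (Fin n → ℝ) × (Fin n → ℝ) → ℝ) (i : Fin n)
    (z : (Fin n → ℝ) × (Fin n → ℝ)) : ℝ :=
  fderiv ℝ f z (0, Pi.single i 1)

/-- The canonical Poisson bracket on `ℝ^n × ℝ^n`. -/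
noncomputable def pbr {n : ℕ} (f g : (Fin n → ℝ) × (Fin n → ℝ) → ℝ)
    (z : (Fin n → ℝ) × (Fin n → ℝ)) : ℝ :=
  ∑ i, (pdx f i z * pdp g i z - pdp f i z * pdx g i z)

/-!
Expanding the Jacobi identity `{G_a, {G_b, H}} + {G_b, {H, G_a}} + {H, {G_a, G_b}} = 0` with the
Leibniz rule and the two closure relations expresses it as `∑_c F_c G_c = 0`, where `F_c` is the
function of the theorem. Differentiating this identity at a point of the constraint surface, where
every `G_c` vanishes, gives `∑_c F_c(z) dG_c(z) = 0`; evaluating it on a vector `w` with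
`dG(z) w = F(z)`, which exists by regularity, yields `∑_c F_c(z)^2 = 0`.
-/

abbrev PhaseSpace (n : ℕ) : Type := (Fin n → ℝ) × (Fin n → ℝ)

section PoissonBracket

variable {n : ℕ} {f g h : PhaseSpace n → ℝ} {z : PhaseSpace n}

theorem pbr_anticomm (f g : PhaseSpace n → ℝ) (z : PhaseSpace n) : pbr f g z = -pbr g f z := by
  simp only [pbr, ← Finset.sum_neg_distrib]
  exact Finset.sum_congr rfl fun i _ => by ring

theorem pbr_neg_right (f g : PhaseSpace n → ℝ) (z : PhaseSpace n) :
    pbr f (fun y => -g y) z = -pbr f g z := by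
  simp only [pbr, pdx, pdp, fderiv_fun_neg, neg_apply, ← Finset.sum_neg_distrib]
  exact Finset.sum_congr rfl fun i _ => by ring

theorem pbr_mul_right (hg : DifferentiableAt ℝ g z) (hh : DifferentiableAt ℝ h z) :
    pbr f (fun y => g y * h y) z = pbr f g z * h z + g z * pbr f h z := by
  simp only [pbr, pdx, pdp, fderiv_fun_mul hg hh, add_apply, smul_apply, smul_eq_mul,
    Finset.sum_mul, Finset.mul_sum, ← Finset.sum_add_distrib]
  exact Finset.sum_congr rfl fun i _ => by ring

theorem pbr_sum_right {ι : Type*} {s : Finset ι} {g : ι → PhaseSpace n → ℝ}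
    (hg : ∀ d ∈ s, DifferentiableAt ℝ (g d) z) :
    pbr f (fun y => ∑ d ∈ s, g d y) z = ∑ d ∈ s, pbr f (g d) z := by
  simp only [pbr, pdx, pdp, fderiv_fun_sum hg, sum_apply, Finset.mul_sum, ← Finset.sum_sub_distrib]
  exact Finset.sum_comm

theorem ContDiff.pbr {k m : WithTop ℕ∞} (hf : ContDiff ℝ k f) (hg : ContDiff ℝ k g)
    (hmk : m + 1 ≤ k) : ContDiff ℝ m (pbr f g) := by
  have hd : ∀ {u : PhaseSpace n → ℝ}, ContDiff ℝ k u → ∀ v,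
      ContDiff ℝ m fun y => fderiv ℝ u y v :=
    fun hu v => (hu.fderiv_right hmk).clm_apply contDiff_const
  exact ContDiff.sum fun i _ => ((hd hf _).mul (hd hg _)).sub ((hd hf _).mul (hd hg _))

theorem pbr_sum_mul_of_pbr_eq_sum {ι : Type*} [Fintype ι] {u G : ι → PhaseSpace n → ℝ}
    {w : ι → ι → PhaseSpace n → ℝ} (hu : ∀ d, DifferentiableAt ℝ (u d) z)
    (hG : ∀ d, DifferentiableAt ℝ (G d) z) (hfG : ∀ d, pbr f (G d) z = ∑ e, w d e z * G e z) :
    pbr f (fun y => ∑ d, u d y * G d y) z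
      = ∑ e, (pbr f (u e) z + ∑ d, u d z * w d e z) * G e z := by
  rw [pbr_sum_right fun d _ => (hu d).fun_mul (hG d)]
  simp only [pbr_mul_right (hu _) (hG _), hfG, Finset.sum_add_distrib, add_mul, Finset.sum_mul,
    Finset.mul_sum, mul_assoc]
  rw [Finset.sum_comm (s := Finset.univ) (f := fun d e => u d z * (w d e z * G e z))]

/-- The Poisson bivector evaluated on covectors, which are taken as plain functions on the
tangent space. -/
def poissonBivector (α β : PhaseSpace n → ℝ) : ℝ :=
  ∑ i, (α (Pi.single i 1, 0) * β (0, Pi.single i 1) - α (0, Pi.single i 1) * β (Pi.single i 1, 0))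

theorem pbr_eq_poissonBivector (f g : PhaseSpace n → ℝ) (z : PhaseSpace n) :
    pbr f g z = poissonBivector (fderiv ℝ f z) (fderiv ℝ g z) := rfl

theorem poissonBivector_add_right (α β γ : PhaseSpace n → ℝ) :
    poissonBivector α (fun v => β v + γ v) = poissonBivector α β + poissonBivector α γ := by
  simp only [poissonBivector, ← Finset.sum_add_distrib]
  exact Finset.sum_congr rfl fun i _ => by ring

theorem poissonBivector_symm_add_eq_zero {B : PhaseSpace n → PhaseSpace n → ℝ}
    (hB : ∀ v w, B v w = B w v) (α β : PhaseSpace n → ℝ) :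
    poissonBivector α (fun v => poissonBivector (B v) β)
      + poissonBivector β (fun v => poissonBivector α (B v)) = 0 := by
  simp only [poissonBivector, Finset.mul_sum, ← Finset.sum_sub_distrib]
  nth_rw 2 [Finset.sum_comm]
  simp only [← Finset.sum_add_distrib]
  refine Finset.sum_eq_zero fun i _ => Finset.sum_eq_zero fun j _ => ?_
  rw [hB (0, Pi.single j 1) (0, Pi.single i 1), hB (0, Pi.single j 1) (Pi.single i 1, 0),
    hB (Pi.single j 1, 0) (0, Pi.single i 1), hB (Pi.single j 1, 0) (Pi.single i 1, 0)]
  ring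

theorem fderiv_fderiv_apply (hf : DifferentiableAt ℝ (fderiv ℝ f) z) (u v : PhaseSpace n) :
    fderiv ℝ (fun y => fderiv ℝ f y u) z v = fderiv ℝ (fderiv ℝ f) z v u := by
  simp [fderiv_clm_apply hf (differentiableAt_const u)]

theorem fderiv_pbr (hg : ContDiff ℝ 2 g) (hh : ContDiff ℝ 2 h) :
    ⇑(fderiv ℝ (pbr g h) z) = fun v => poissonBivector (fderiv ℝ (fderiv ℝ g) z v) (fderiv ℝ h z)
      + poissonBivector (fderiv ℝ g z) (fderiv ℝ (fderiv ℝ h) z v) := by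
  have hg' : Differentiable ℝ (fderiv ℝ g) := (hg.fderiv_right le_rfl).differentiable one_ne_zero
  have hh' : Differentiable ℝ (fderiv ℝ h) := (hh.fderiv_right le_rfl).differentiable one_ne_zero
  funext v
  unfold pbr pdx pdp
  simp (disch := fun_prop) only [fderiv_fun_sum, fderiv_fun_sub, fderiv_fun_mul, sum_apply,
    sub_apply, add_apply, smul_apply, smul_eq_mul, fderiv_fderiv_apply, poissonBivector,
    ← Finset.sum_add_distrib]
  exact Finset.sum_congr rfl fun i _ => by ring

theorem pbr_jacobi (hf : ContDiff ℝ 2 f) (hg : ContDiff ℝ 2 g) (hh : ContDiff ℝ 2 h)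
    (z : PhaseSpace n) : pbr f (pbr g h) z + pbr g (pbr h f) z + pbr h (pbr f g) z = 0 := by
  have hsymm : ∀ {u : PhaseSpace n → ℝ}, ContDiff ℝ 2 u → ∀ v w,
      fderiv ℝ (fderiv ℝ u) z v w = fderiv ℝ (fderiv ℝ u) z w v :=
    fun hu => hu.contDiffAt.isSymmSndFDerivAt (by simp)
  rw [pbr_eq_poissonBivector f, pbr_eq_poissonBivector g, pbr_eq_poissonBivector h,
    fderiv_pbr hf hg, fderiv_pbr hg hh, fderiv_pbr hh hf]
  simp only [poissonBivector_add_right]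
  -- each second derivative occurs in two of the three brackets, and these two terms cancel
  linarith [poissonBivector_symm_add_eq_zero (hsymm hf) (fderiv ℝ h z) (fderiv ℝ g z),
    poissonBivector_symm_add_eq_zero (hsymm hg) (fderiv ℝ f z) (fderiv ℝ h z),
    poissonBivector_symm_add_eq_zero (hsymm hh) (fderiv ℝ g z) (fderiv ℝ f z)]

end PoissonBracket

theorem eq_zero_of_sum_mul_eq_zero_of_surjective_fderiv {E ι : Type*} [NormedAddCommGroup E]
    [NormedSpace ℝ E] [Fintype ι] {G F : ι → E → ℝ} {z : E}
    (hsurj : Function.Surjective (fderiv ℝ (fun w e => G e w) z))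
    (hGz : ∀ e, G e z = 0) (hG : ∀ e, DifferentiableAt ℝ (G e) z)
    (hF : ∀ e, DifferentiableAt ℝ (F e) z) (hrel : ∀ᶠ y in nhds z, ∑ e, F e y * G e y = 0)
    (e : ι) : F e z = 0 := by
  have hderiv : HasFDerivAt (fun y => ∑ e, F e y * G e y) (∑ e, F e z • fderiv ℝ (G e) z) z := by
    simpa [hGz] using HasFDerivAt.fun_sum fun e _ => (hF e).hasFDerivAt.mul (hG e).hasFDerivAt
  have hcrit : ∑ e, F e z • fderiv ℝ (G e) z = 0 :=
    hderiv.unique ((hasFDerivAt_const 0 z).congr_of_eventuallyEq hrel)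
  obtain ⟨w, hw⟩ := hsurj fun e => F e z
  have hwe : ∀ e, fderiv ℝ (G e) z w = F e z := fun e => by
    simpa [fderiv_pi (fun e => hG e)] using congrFun hw e
  have hsq : ∑ e, F e z * F e z = 0 := by
    simpa [hwe] using DFunLike.congr_fun hcrit w
  exact mul_self_eq_zero.1 <| (Finset.sum_eq_zero_iff_of_nonneg fun e _ => mul_self_nonneg (F e z)).1
    hsq e (Finset.mem_univ e)

section FirstClass

variable {n r : ℕ} {G : Fin r → PhaseSpace n → ℝ} {C : Fin r → Fin r → Fin r → PhaseSpace n → ℝ}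
  {H : PhaseSpace n → ℝ} {V : Fin r → Fin r → PhaseSpace n → ℝ}

/-- The coefficient of `G c` in the Jacobi identity for `G a`, `G b`, `H`, once the brackets are
expanded with the structure functions `C` and the coefficients `V` of `{G a, H}`. -/
noncomputable def jacobiCoeff (G : Fin r → PhaseSpace n → ℝ)
    (C : Fin r → Fin r → Fin r → PhaseSpace n → ℝ) (H : PhaseSpace n → ℝ)
    (V : Fin r → Fin r → PhaseSpace n → ℝ) (a b c : Fin r) (z : PhaseSpace n) : ℝ :=
  pbr (G a) (V b c) z - pbr (G b) (V a c) z + pbr H (C a b c) z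
    + ∑ d, (V b d z * C a d c z - V a d z * C b d c z - V d c z * C a b d z)

theorem ContDiff.jacobiCoeff {k m : WithTop ℕ∞} (hG : ∀ a, ContDiff ℝ k (G a))
    (hC : ∀ a b c, ContDiff ℝ k (C a b c)) (hH : ContDiff ℝ k H) (hV : ∀ a b, ContDiff ℝ k (V a b))
    (hmk : m + 1 ≤ k) (a b c : Fin r) : ContDiff ℝ m (jacobiCoeff G C H V a b c) := by
  have hle : m ≤ k := le_self_add.trans hmk
  have hprod : ∀ {u v : PhaseSpace n → ℝ}, ContDiff ℝ k u → ContDiff ℝ k v →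
      ContDiff ℝ m fun y => u y * v y :=
    fun hu hv => (hu.of_le hle).mul (hv.of_le hle)
  exact (((hG a).pbr (hV b c) hmk).sub ((hG b).pbr (hV a c) hmk)).add (hH.pbr (hC a b c) hmk)
    |>.add <| ContDiff.sum fun d _ =>
      ((hprod (hV b d) (hC a d c)).sub (hprod (hV a d) (hC b d c))).sub (hprod (hV d c) (hC a b d))

theorem sum_jacobiCoeff_mul_eq_zero (hG : ∀ a, ContDiff ℝ 2 (G a))
    (hC : ∀ a b c, Differentiable ℝ (C a b c)) (hH : ContDiff ℝ 2 H)
    (hV : ∀ a b, Differentiable ℝ (V a b))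
    (hfc : ∀ a b z, pbr (G a) (G b) z = ∑ c, C a b c z * G c z)
    (hGH : ∀ a z, pbr (G a) H z = ∑ b, V a b z * G b z) (a b : Fin r) (z : PhaseSpace n) :
    ∑ c, jacobiCoeff G C H V a b c z * G c z = 0 := by
  have hGd : ∀ d, DifferentiableAt ℝ (G d) z := fun d => (hG d).differentiable two_ne_zero z
  have hHG : ∀ d, pbr H (G d) z = ∑ e, -V d e z * G e z := fun d => by
    simp [pbr_anticomm H, hGH]
  have hab : pbr (G a) (pbr (G b) H) z
      = ∑ c, (pbr (G a) (V b c) z + ∑ d, V b d z * C a d c z) * G c z := by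
    rw [funext (hGH b)]
    exact pbr_sum_mul_of_pbr_eq_sum (fun d => hV b d z) hGd (hfc a · z)
  have hba : pbr (G b) (pbr H (G a)) z
      = -∑ c, (pbr (G b) (V a c) z + ∑ d, V a d z * C b d c z) * G c z := by
    rw [show pbr H (G a) = fun y => -∑ d, V a d y * G d y from funext fun y => by
      rw [pbr_anticomm, hGH], pbr_neg_right,
      pbr_sum_mul_of_pbr_eq_sum (fun d => hV a d z) hGd (hfc b · z)]
  have hHab : pbr H (pbr (G a) (G b)) z
      = ∑ c, (pbr H (C a b c) z + ∑ d, C a b d z * -V d c z) * G c z := by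
    rw [funext (hfc a b)]
    exact pbr_sum_mul_of_pbr_eq_sum (w := fun d e y => -V d e y) (fun d => hC a b d z) hGd hHG
  have hJ := pbr_jacobi (hG a) (hG b) hH z
  rw [hab, hba, hHab, ← Finset.sum_neg_distrib, ← Finset.sum_add_distrib,
    ← Finset.sum_add_distrib] at hJ
  rw [← hJ]
  refine Finset.sum_congr rfl fun c _ => ?_
  have hsum : ∑ d, (V b d z * C a d c z - V a d z * C b d c z - V d c z * C a b d z)
      = ∑ d, V b d z * C a d c z - ∑ d, V a d z * C b d c z + ∑ d, C a b d z * -V d c z := by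
    rw [← Finset.sum_sub_distrib, ← Finset.sum_add_distrib]
    exact Finset.sum_congr rfl fun d _ => by ring
  rw [jacobiCoeff, hsum]
  ring

end FirstClass

theorem first_class_hamiltonian_onshell_identity_general {n r : ℕ}
    (G : Fin r → (Fin n → ℝ) × (Fin n → ℝ) → ℝ)
    (hG : ∀ a, ContDiff ℝ (⊤ : ℕ∞) (G a))
    (C : Fin r → Fin r → Fin r → (Fin n → ℝ) × (Fin n → ℝ) → ℝ)
    (hC : ∀ a b c, ContDiff ℝ (⊤ : ℕ∞) (C a b c))
    (hfc : ∀ a b z, pbr (G a) (G b) z = ∑ c, C a b c z * G c z)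
    (H : (Fin n → ℝ) × (Fin n → ℝ) → ℝ) (hH : ContDiff ℝ (⊤ : ℕ∞) H)
    (V : Fin r → Fin r → (Fin n → ℝ) × (Fin n → ℝ) → ℝ)
    (hV : ∀ a b, ContDiff ℝ (⊤ : ℕ∞) (V a b))
    (hGH : ∀ a z, pbr (G a) H z = ∑ b, V a b z * G b z)
    (hreg : ∀ z, (∀ a, G a z = 0) →
      Function.Surjective (fderiv ℝ (fun w => (fun a => G a w : Fin r → ℝ)) z)) :
    ∀ (a b c : Fin r) (z : (Fin n → ℝ) × (Fin n → ℝ)), (∀ e, G e z = 0) →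
      pbr (G a) (V b c) z - pbr (G b) (V a c) z + pbr H (C a b c) z
        + ∑ d, (V b d z * C a d c z - V a d z * C b d c z - V d c z * C a b d z)
      = 0 := by
  intro a b c z hz
  have h2 : ∀ {u : (Fin n → ℝ) × (Fin n → ℝ) → ℝ}, ContDiff ℝ (⊤ : ℕ∞) u → ContDiff ℝ 2 u :=
    fun hu => hu.of_le (WithTop.coe_le_coe.2 le_top)
  have hG2 := fun e => h2 (hG e)
  have hC2 := fun a b c => h2 (hC a b c)
  have hV2 := fun a b => h2 (hV a b)
  have hrel := sum_jacobiCoeff_mul_eq_zero hG2 (fun a b c => (hC2 a b c).differentiable two_ne_zero)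
    (h2 hH) (fun a b => (hV2 a b).differentiable two_ne_zero) hfc hGH a b
  have hF := ContDiff.jacobiCoeff (m := 1) hG2 hC2 (h2 hH) hV2 (by norm_num) a b
  exact eq_zero_of_sum_mul_eq_zero_of_surjective_fderiv (hreg z hz) hz
    (fun e => (hG2 e).differentiable two_ne_zero z) (fun e => (hF e).differentiable one_ne_zero z)
    (.of_forall hrel) c

/-- For regular irreducible first-class constraints `G_a` (structure functions `C^c_{ab}`,
written `C a b c`) and a compatible Hamiltonian `H` with `{G_a, H} = Σ_b V_a^b G_b`, the
function `{G_a,V_b^c} − {G_b,V_a^c} + {H,C^c_{ab}} + Σ_d ( V_b^d C^c_{ad} − V_a^d C^c_{bd}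
 − V_d^c C^d_{ab} )` vanishes at every point of the constraint surface. -/
theorem first_class_hamiltonian_onshell_identity {n r : ℕ}
    (G : Fin r → (Fin n → ℝ) × (Fin n → ℝ) → ℝ)
    (hG : ∀ a, ContDiff ℝ (⊤ : ℕ∞) (G a))
    (C : Fin r → Fin r → Fin r → (Fin n → ℝ) × (Fin n → ℝ) → ℝ)
    (hC : ∀ a b c, ContDiff ℝ (⊤ : ℕ∞) (C a b c))
    (hCanti : ∀ a b c z, C a b c z = - C b a c z)
    (hfc : ∀ a b z, pbr (G a) (G b) z = ∑ c, C a b c z * G c z)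
    (H : (Fin n → ℝ) × (Fin n → ℝ) → ℝ) (hH : ContDiff ℝ (⊤ : ℕ∞) H)
    (V : Fin r → Fin r → (Fin n → ℝ) × (Fin n → ℝ) → ℝ)
    (hV : ∀ a b, ContDiff ℝ (⊤ : ℕ∞) (V a b))
    (hGH : ∀ a z, pbr (G a) H z = ∑ b, V a b z * G b z)
    (hreg : ∀ z, (∀ a, G a z = 0) →
      Function.Surjective (fderiv ℝ (fun w => (fun a => G a w : Fin r → ℝ)) z)) :
    ∀ (a b c : Fin r) (z : (Fin n → ℝ) × (Fin n → ℝ)), (∀ e, G e z = 0) →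
      pbr (G a) (V b c) z - pbr (G b) (V a c) z + pbr H (C a b c) z
        + ∑ d, (V b d z * C a d c z - V a d z * C b d c z - V d c z * C a b d z)
      = 0 :=
  first_class_hamiltonian_onshell_identity_general G hG C hC hfc H hH V hV hGH hreg
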